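/- Let Φ(τ) = τ/log(e+τ) and define the variant Orlicz norm ‖f‖_{L_*^Φ} := Σ_{k∈ℤⁿ} ‖f·1_{Q_k}‖_{L^Φ}, where Q_k := k + [0,1)ⁿ. Then for any ball B ⊂ ℝⁿ, ‖1_B‖_{L_*^Φ} ≍ |B|/log(e+1/|B|), with implicit constants independent of B. -/

import Mathlib

open MeasureTheory ENNReal

/-- The Luxemburg (quasi-)norm of `f` in the Orlicz space `L^Φ(ℝⁿ)`,
valued in `ℝ≥0∞` (infimum of the empty set is `∞`). -/
noncomputable def luxNormE {n : ℕ} (Φ : ℝ → ℝ)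
    (f : EuclideanSpace ℝ (Fin n) → ℝ) : ℝ≥0∞ :=
  sInf ((fun l : NNReal => (l : ℝ≥0∞)) ''
    {l : NNReal | 0 < l ∧ ∫⁻ x, ENNReal.ofReal (Φ (|f x| / (l : ℝ))) ≤ 1})

/-- The unit cube `Q_k = k + [0,1)ⁿ` for `k ∈ ℤⁿ`. -/
def unitCube {n : ℕ} (k : Fin n → ℤ) : Set (EuclideanSpace ℝ (Fin n)) :=
  {x | ∀ i, (k i : ℝ) ≤ x i ∧ x i < (k i : ℝ) + 1}

/-- The variant Orlicz norm `‖f‖_{L_*^Φ} = Σ_{k∈ℤⁿ} ‖f·1_{Q_k}‖_{L^Φ}`. -/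
noncomputable def starNormE {n : ℕ} (Φ : ℝ → ℝ)
    (f : EuclideanSpace ℝ (Fin n) → ℝ) : ℝ≥0∞ :=
  ∑' k : Fin n → ℤ, luxNormE Φ (Set.indicator (unitCube k) f)

/-!
For a measurable set `A` of measure `m`, `∫ Φ(1_A / λ) = Φ(1/λ) m`, and solving
`Φ(1/λ) m ≤ 1` shows `‖1_A‖_{L^Φ} ≍ m / log(e + 1/m)` up to a factor `2`. Summing over the
cubes, the upper bound holds because every piece `m_k ≤ |B|` has
`log(e + 1/m_k) ≥ log(e + 1/|B|)`. For the lower bound, Cauchy–Schwarz gives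
`|B|² ≤ (∑ m_k / log(e + 1/m_k)) (∑ m_k log(e + 1/m_k))`; since `t ↦ t log(e + 1/t)` is
increasing and a ball meets `≲ 1 + |B|` unit cubes, the second factor is `≲ |B| log(e + 1/|B|)`.
-/

open Real Metric Function

noncomputable def logPhi (τ : ℝ) : ℝ := τ / Real.log (Real.exp 1 + τ)

lemma logPhi_zero : logPhi 0 = 0 := by simp [logPhi]

lemma one_le_log_exp_one_add {τ : ℝ} (hτ : 0 ≤ τ) : 1 ≤ Real.log (Real.exp 1 + τ) :=
  (le_log_iff_exp_le (by positivity)).2 (by linarith)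

lemma log_exp_one_add_pos {τ : ℝ} (hτ : 0 ≤ τ) : 0 < Real.log (Real.exp 1 + τ) :=
  one_pos.trans_le (one_le_log_exp_one_add hτ)

lemma log_two_mul_lt_self {L : ℝ} (hL : 1 ≤ L) : Real.log (2 * L) < L := by
  rw [log_mul two_ne_zero (by positivity)]
  linarith [log_two_lt_d9, log_le_sub_one_of_pos (by positivity : 0 < L)]

lemma log_exp_one_add_one_le_two : Real.log (Real.exp 1 + 1) ≤ 2 := by
  calc Real.log (Real.exp 1 + 1) ≤ Real.log (2 * Real.exp 1) :=
        log_le_log (by positivity) (by linarith [add_one_le_exp 1])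
  _ ≤ 2 := by rw [log_mul two_ne_zero (exp_pos 1).ne', log_exp]; linarith [log_two_lt_d9]

lemma log_exp_one_add_le {a b : ℝ} (ha : 0 ≤ a) (hb : 0 ≤ b) :
    Real.log (Real.exp 1 + b) ≤ Real.log (Real.exp 1 + a) + (b - a) / (Real.exp 1 + a) := by
  have hpos : 0 < Real.exp 1 + a := by positivity
  have h := Real.log_le_sub_one_of_pos (div_pos (by positivity : 0 < Real.exp 1 + b) hpos)
  rw [Real.log_div (by positivity) hpos.ne'] at h
  have : (Real.exp 1 + b) / (Real.exp 1 + a) - 1 = (b - a) / (Real.exp 1 + a) := by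
    field_simp; ring
  linarith

lemma logPhi_le_logPhi {a b : ℝ} (ha : 0 ≤ a) (hab : a ≤ b) : logPhi a ≤ logPhi b := by
  have hLa := one_le_log_exp_one_add ha
  have hfrac : a / (Real.exp 1 + a) ≤ 1 := by
    rw [div_le_one (by positivity)]; linarith [exp_pos 1]
  rw [logPhi, logPhi, div_le_div_iff₀ (by linarith) (log_exp_one_add_pos (ha.trans hab))]
  calc a * Real.log (Real.exp 1 + b)
      ≤ a * (Real.log (Real.exp 1 + a) + (b - a) / (Real.exp 1 + a)) :=
        mul_le_mul_of_nonneg_left (log_exp_one_add_le ha (ha.trans hab)) ha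
  _ = a * Real.log (Real.exp 1 + a) + (b - a) * (a / (Real.exp 1 + a)) := by ring
  _ ≤ a * Real.log (Real.exp 1 + a) + (b - a) * Real.log (Real.exp 1 + a) := by
        gcongr
        linarith
  _ = b * Real.log (Real.exp 1 + a) := by ring

lemma inv_logPhi_inv (t : ℝ) : (logPhi t⁻¹)⁻¹ = t * Real.log (Real.exp 1 + t⁻¹) := by
  rw [logPhi, inv_div, div_inv_eq_mul, mul_comm]

lemma mul_log_exp_one_add_inv_le {a c : ℝ} (ha : 0 ≤ a) (hac : a ≤ c) :
    a * Real.log (Real.exp 1 + 1 / a) ≤ c * Real.log (Real.exp 1 + 1 / c) := by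
  obtain rfl | ha := ha.eq_or_lt
  · simpa using mul_nonneg (ha.trans hac) (log_exp_one_add_pos (by positivity)).le
  have hc := ha.trans_le hac
  simp only [one_div, ← inv_logPhi_inv]
  exact inv_anti₀ (div_pos (by positivity) (log_exp_one_add_pos (by positivity)))
    (logPhi_le_logPhi (by positivity) (inv_anti₀ ha hac))

lemma logPhi_div_mul {u m : ℝ} (hm : m ≠ 0) :
    logPhi (u / m) * m = u / Real.log (Real.exp 1 + u / m) := by
  rw [logPhi]; field_simp

lemma logPhi_mul_le_one {m : ℝ} (hm : 0 < m) :
    logPhi (1 / (m / Real.log (Real.exp 1 + 1 / m))) * m ≤ 1 := by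
  set L := Real.log (Real.exp 1 + 1 / m)
  have hL := log_exp_one_add_pos (one_div_nonneg.2 hm.le)
  have hle : L ≤ Real.log (Real.exp 1 + L / m) :=
    log_le_log (by positivity) (by gcongr; exact one_le_log_exp_one_add (by positivity))
  rw [one_div_div, logPhi_div_mul hm.ne', div_le_one (hL.trans_le hle)]
  exact hle

lemma one_lt_logPhi_mul {m l : ℝ} (hm : 0 ≤ m) (hl : 0 < l)
    (hlm : l < m / (2 * Real.log (Real.exp 1 + 1 / m))) : 1 < logPhi (1 / l) * m := by
  set L := Real.log (Real.exp 1 + 1 / m)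
  have hL := one_le_log_exp_one_add (one_div_nonneg.2 hm)
  have hm : 0 < m := (div_pos_iff_of_pos_right (by positivity)).1 (hl.trans hlm)
  have hinv : 2 * L / m < 1 / l := by
    simpa only [one_div_div] using one_div_lt_one_div_of_lt hl hlm
  have hlog : Real.log (Real.exp 1 + 2 * L / m) < 2 * L :=
    calc Real.log (Real.exp 1 + 2 * L / m) ≤ Real.log (2 * L * (Real.exp 1 + 1 / m)) := by
          gcongr
          rw [mul_add, mul_one_div]
          nlinarith [exp_pos 1]
    _ = Real.log (2 * L) + L := by rw [log_mul (by positivity) (by positivity)]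
    _ < 2 * L := by linarith [log_two_mul_lt_self hL]
  calc 1 < logPhi (2 * L / m) * m := by
        rw [logPhi_div_mul hm.ne', one_lt_div (log_exp_one_add_pos (by positivity))]
        exact hlog
  _ ≤ logPhi (1 / l) * m := by
        gcongr
        exact logPhi_le_logPhi (by positivity) hinv.le

lemma div_log_exp_one_add_inv_le {m b : ℝ} (hm : 0 ≤ m) (hmb : m ≤ b) :
    m / Real.log (Real.exp 1 + 1 / m) ≤ m / Real.log (Real.exp 1 + 1 / b) := by
  obtain rfl | hm := hm.eq_or_lt
  · simp
  have hb := hm.trans_le hmb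
  refine div_le_div_of_nonneg_left hm.le (log_exp_one_add_pos (by positivity)) ?_
  gcongr

lemma add_mul_min_one_mul_log_le {v b : ℝ} (hv : 0 ≤ v) (hb : 0 < b) :
    (v + b) * (min 1 b * Real.log (Real.exp 1 + 1 / min 1 b)) ≤
      2 * (v + 1) * (b * Real.log (Real.exp 1 + 1 / b)) := by
  have hL := one_le_log_exp_one_add (one_div_nonneg.2 hb.le)
  rcases le_total b 1 with hb1 | hb1
  · rw [min_eq_right hb1]
    gcongr
    linarith
  · rw [min_eq_left hb1, div_one, one_mul]
    calc (v + b) * Real.log (Real.exp 1 + 1) ≤ (v + b) * 2 := by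
          gcongr; exact log_exp_one_add_one_le_two
    _ ≤ 2 * (v + 1) * (b * 1) := by nlinarith
    _ ≤ 2 * (v + 1) * (b * Real.log (Real.exp 1 + 1 / b)) := by gcongr

lemma sq_sum_le_sum_div_log_mul_card {ι : Type*} (S : Finset ι) {m : ι → ℝ} {μ : ℝ}
    (hm : ∀ k ∈ S, 0 ≤ m k) (hmμ : ∀ k ∈ S, m k ≤ μ) :
    (∑ k ∈ S, m k) ^ 2 ≤ (∑ k ∈ S, m k / Real.log (Real.exp 1 + 1 / m k)) *
      (S.card * (μ * Real.log (Real.exp 1 + 1 / μ))) := by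
  have hL : ∀ k ∈ S, 0 < Real.log (Real.exp 1 + 1 / m k) := fun k hk =>
    log_exp_one_add_pos (one_div_nonneg.2 (hm k hk))
  calc (∑ k ∈ S, m k) ^ 2 ≤ (∑ k ∈ S, m k / Real.log (Real.exp 1 + 1 / m k)) *
        ∑ k ∈ S, m k * Real.log (Real.exp 1 + 1 / m k) := by
        refine Finset.sum_sq_le_sum_mul_sum_of_sq_le_mul S
          (fun k hk => div_nonneg (hm k hk) (hL k hk).le)
          (fun k hk => mul_nonneg (hm k hk) (hL k hk).le) fun k hk => ?_
        rw [div_mul_eq_mul_div, ← mul_assoc, ← sq, mul_div_cancel_right₀ _ (hL k hk).ne']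
  _ ≤ (∑ k ∈ S, m k / Real.log (Real.exp 1 + 1 / m k)) *
        (S.card * (μ * Real.log (Real.exp 1 + 1 / μ))) := by
        gcongr
        · exact Finset.sum_nonneg fun k hk => div_nonneg (hm k hk) (hL k hk).le
        · rw [← nsmul_eq_mul, ← Finset.sum_const]
          exact Finset.sum_le_sum fun k hk => mul_log_exp_one_add_inv_le (hm k hk) (hmμ k hk)

lemma add_pow_le_one_add_pow_mul {r s : ℝ} (hr : 0 ≤ r) (hs : 0 ≤ s) (d : ℕ) :
    (r + s) ^ d ≤ (1 + s) ^ d * (1 + r ^ d) := by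
  rcases le_total r 1 with hr1 | hr1
  · calc (r + s) ^ d ≤ (1 + s) ^ d := by gcongr
    _ ≤ (1 + s) ^ d * (1 + r ^ d) := le_mul_of_one_le_right (by positivity) (by simp; positivity)
  · calc (r + s) ^ d ≤ ((1 + s) * r) ^ d := by gcongr; nlinarith
    _ ≤ (1 + s) ^ d * (1 + r ^ d) := by rw [mul_pow]; gcongr; linarith

lemma addHaar_ball_add_le {E : Type*} [NormedAddCommGroup E] [NormedSpace ℝ E]
    [MeasurableSpace E] [BorelSpace E] [FiniteDimensional ℝ E] (μ : Measure E)
    [μ.IsAddHaarMeasure] (x : E) {r s : ℝ} (hr : 0 < r) (hs : 0 ≤ s) :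
    μ (ball x (r + s)) ≤
      ENNReal.ofReal ((1 + s) ^ Module.finrank ℝ E) * (μ (ball 0 1) + μ (ball x r)) := by
  rw [Measure.addHaar_ball_of_pos μ x (by positivity), Measure.addHaar_ball_of_pos μ x hr]
  calc ENNReal.ofReal ((r + s) ^ Module.finrank ℝ E) * μ (ball 0 1)
      ≤ ENNReal.ofReal ((1 + s) ^ Module.finrank ℝ E * (1 + r ^ Module.finrank ℝ E)) *
          μ (ball 0 1) := by
        gcongr; exact add_pow_le_one_add_pow_mul hr.le hs _
  _ = _ := by
        rw [ENNReal.ofReal_mul (by positivity), ENNReal.ofReal_add zero_le_one (by positivity),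
          ENNReal.ofReal_one]
        ring

section

variable {n : ℕ}

lemma luxNormE_le_ofReal {Φ : ℝ → ℝ} {f : EuclideanSpace ℝ (Fin n) → ℝ} {l : ℝ}
    (hl : 0 < l) (h : ∫⁻ x, ENNReal.ofReal (Φ (|f x| / l)) ≤ 1) :
    luxNormE Φ f ≤ ENNReal.ofReal l :=
  sInf_le ⟨l.toNNReal, ⟨by simpa using hl, by simpa [hl.le] using h⟩, rfl⟩

lemma le_luxNormE {Φ : ℝ → ℝ} {f : EuclideanSpace ℝ (Fin n) → ℝ} {a : ℝ≥0∞}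
    (h : ∀ l : ℝ, 0 < l →
      ∫⁻ x, ENNReal.ofReal (Φ (|f x| / l)) ≤ 1 → a ≤ ENNReal.ofReal l) :
    a ≤ luxNormE Φ f := by
  refine le_sInf ?_
  rintro _ ⟨l, ⟨hl, hint⟩, rfl⟩
  simpa using h l hl hint

lemma lintegral_comp_indicator_one {Φ : ℝ → ℝ} (hΦ : Φ 0 = 0)
    {A : Set (EuclideanSpace ℝ (Fin n))} (hA : MeasurableSet A) (l : ℝ) :
    ∫⁻ x, ENNReal.ofReal (Φ (|A.indicator (fun _ => (1 : ℝ)) x| / l)) =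
      ENNReal.ofReal (Φ (1 / l)) * volume A := by
  have h : (fun x => ENNReal.ofReal (Φ (|A.indicator (fun _ => (1 : ℝ)) x| / l))) =
      A.indicator fun _ => ENNReal.ofReal (Φ (1 / l)) := by
    funext x
    by_cases hx : x ∈ A <;> simp [hx, hΦ]
  rw [h, lintegral_indicator_const hA]

lemma luxNormE_indicator_eq_zero {Φ : ℝ → ℝ} (hΦ : Φ 0 = 0)
    {A : Set (EuclideanSpace ℝ (Fin n))} (hA : MeasurableSet A) (h0 : volume A = 0) :
    luxNormE Φ (A.indicator fun _ => (1 : ℝ)) = 0 := by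
  refine le_antisymm (ENNReal.le_of_forall_pos_le_add fun ε hε _ => ?_) zero_le
  simpa using luxNormE_le_ofReal (f := A.indicator fun _ => (1 : ℝ)) (Φ := Φ)
    (NNReal.coe_pos.2 hε)
    (by rw [lintegral_comp_indicator_one hΦ hA, h0, mul_zero]; exact zero_le_one)

lemma luxNormE_indicator_le {A : Set (EuclideanSpace ℝ (Fin n))} (hA : MeasurableSet A)
    (hfin : volume A ≠ ⊤) :
    luxNormE logPhi (A.indicator fun _ => (1 : ℝ)) ≤ ENNReal.ofReal ((volume A).toReal /
      Real.log (Real.exp 1 + 1 / (volume A).toReal)) := by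
  set m := (volume A).toReal
  have hvol : volume A = ENNReal.ofReal m := (ENNReal.ofReal_toReal hfin).symm
  obtain h0 | hm := (ENNReal.toReal_nonneg (a := volume A)).eq_or_lt
  · rw [luxNormE_indicator_eq_zero logPhi_zero hA
      (((ENNReal.toReal_eq_zero_iff _).1 h0.symm).resolve_right hfin)]
    exact zero_le
  · refine luxNormE_le_ofReal (div_pos hm (log_exp_one_add_pos (by positivity))) ?_
    rw [lintegral_comp_indicator_one logPhi_zero hA, hvol, ← ENNReal.ofReal_mul' hm.le]
    exact ENNReal.ofReal_le_one.2 (logPhi_mul_le_one hm)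

lemma le_luxNormE_indicator {A : Set (EuclideanSpace ℝ (Fin n))} (hA : MeasurableSet A)
    (hfin : volume A ≠ ⊤) :
    ENNReal.ofReal ((volume A).toReal / (2 * Real.log (Real.exp 1 + 1 / (volume A).toReal))) ≤
      luxNormE logPhi (A.indicator fun _ => (1 : ℝ)) := by
  set m := (volume A).toReal
  have hvol : volume A = ENNReal.ofReal m := (ENNReal.ofReal_toReal hfin).symm
  refine le_luxNormE fun l hl hint => ENNReal.ofReal_le_ofReal (not_lt.1 fun hlt => ?_)
  rw [lintegral_comp_indicator_one logPhi_zero hA, hvol,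
    ← ENNReal.ofReal_mul' ENNReal.toReal_nonneg, ENNReal.ofReal_le_one] at hint
  exact hint.not_gt (one_lt_logPhi_mul ENNReal.toReal_nonneg hl hlt)

lemma mem_unitCube_iff {k : Fin n → ℤ} {x : EuclideanSpace ℝ (Fin n)} :
    x ∈ unitCube k ↔ k = fun i => ⌊x i⌋ := by
  simp only [unitCube, Set.mem_ofPred_eq, funext_iff, eq_comm (a := k _), Int.floor_eq_iff]

lemma pairwise_disjoint_unitCube : Pairwise (Disjoint on fun k : Fin n → ℤ => unitCube k) :=
  fun _ _ hkk' => Set.disjoint_left.2 fun _ hx hx' =>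
    hkk' ((mem_unitCube_iff.1 hx).trans (mem_unitCube_iff.1 hx').symm)

lemma iUnion_unitCube : ⋃ k : Fin n → ℤ, unitCube k = Set.univ :=
  Set.eq_univ_of_forall fun x => Set.mem_iUnion.2 ⟨fun i => ⌊x i⌋, mem_unitCube_iff.2 rfl⟩

lemma unitCube_eq_preimage (k : Fin n → ℤ) :
    unitCube k = (MeasurableEquiv.toLp 2 (Fin n → ℝ)).symm ⁻¹'
      Set.univ.pi fun i => Set.Ico (k i : ℝ) (k i + 1) := by
  ext x; simp [unitCube, MeasurableEquiv.toLp_symm_apply]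

lemma measurableSet_unitCube (k : Fin n → ℤ) : MeasurableSet (unitCube k) := by
  rw [unitCube_eq_preimage]
  exact (MeasurableEquiv.measurable _) (MeasurableSet.univ_pi fun _ => measurableSet_Ico)

lemma volume_unitCube (k : Fin n → ℤ) : volume (unitCube k) = 1 := by
  rw [unitCube_eq_preimage, (EuclideanSpace.volume_preserving_symm_measurableEquiv_toLp
    (Fin n)).measure_preimage (MeasurableSet.univ_pi fun _ => measurableSet_Ico).nullMeasurableSet,
    volume_pi_pi]
  simp

lemma tsum_volume_unitCube_inter {B : Set (EuclideanSpace ℝ (Fin n))} (hB : MeasurableSet B) :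
    ∑' k : Fin n → ℤ, volume (unitCube k ∩ B) = volume B := by
  rw [← measure_iUnion (fun _ _ h => (pairwise_disjoint_unitCube h).mono Set.inter_subset_left
      Set.inter_subset_left) fun k => (measurableSet_unitCube k).inter hB,
    ← Set.iUnion_inter, iUnion_unitCube, Set.univ_inter]

lemma volume_unitCube_inter_le_one (k : Fin n → ℤ) (B : Set (EuclideanSpace ℝ (Fin n))) :
    volume (unitCube k ∩ B) ≤ 1 :=
  (measure_mono Set.inter_subset_left).trans_eq (volume_unitCube k)

lemma dist_le_sqrt_of_mem_unitCube {k : Fin n → ℤ} {x y : EuclideanSpace ℝ (Fin n)}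
    (hx : x ∈ unitCube k) (hy : y ∈ unitCube k) : dist x y ≤ √n := by
  rw [EuclideanSpace.dist_eq]
  refine Real.sqrt_le_sqrt ((Finset.sum_le_sum (g := fun _ => 1) fun i _ => ?_).trans_eq (by simp))
  rw [Real.dist_eq, sq_le_one_iff_abs_le_one, abs_abs]
  exact abs_le.2 ⟨by linarith [hx i, hy i], by linarith [hx i, hy i]⟩

lemma unitCube_subset_ball {k : Fin n → ℤ} {x₀ : EuclideanSpace ℝ (Fin n)} {r : ℝ}
    (h : (ball x₀ r ∩ unitCube k).Nonempty) : unitCube k ⊆ ball x₀ (r + √n) := by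
  obtain ⟨y, hyB, hyQ⟩ := h
  intro z hz
  rw [mem_ball] at hyB ⊢
  linarith [dist_triangle z y x₀, dist_le_sqrt_of_mem_unitCube hz hyQ]

lemma card_le_volume_of_unitCube_subset {T : Finset (Fin n → ℤ)}
    {U : Set (EuclideanSpace ℝ (Fin n))} (hT : ∀ k ∈ T, unitCube k ⊆ U) :
    (T.card : ℝ≥0∞) ≤ volume U := by
  calc (T.card : ℝ≥0∞) = volume (⋃ k ∈ T, unitCube k) := by
        rw [measure_biUnion_finset (fun k _ k' _ h => pairwise_disjoint_unitCube h)
          fun k _ => measurableSet_unitCube k]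
        simp [volume_unitCube]
  _ ≤ volume U := measure_mono (Set.iUnion₂_subset hT)

lemma finite_setOf_ball_inter_unitCube_nonempty (x₀ : EuclideanSpace ℝ (Fin n)) (r : ℝ) :
    {k : Fin n → ℤ | (ball x₀ r ∩ unitCube k).Nonempty}.Finite := by
  refine (Measure.finite_const_le_meas_of_disjoint_iUnion volume one_pos
    (fun k => (measurableSet_unitCube k).inter (measurableSet_ball (x := x₀) (ε := r + √n)))
    (fun _ _ h => (pairwise_disjoint_unitCube h).mono Set.inter_subset_left Set.inter_subset_left)
    (ne_top_of_le_ne_top measure_ball_lt_top.ne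
      (measure_mono (Set.iUnion_subset fun _ => Set.inter_subset_right)))).subset fun k hk => ?_
  show 1 ≤ volume (unitCube k ∩ _)
  rw [Set.inter_eq_left.2 (unitCube_subset_ball hk), volume_unitCube]

lemma card_le_of_ball_inter_unitCube_nonempty {S : Finset (Fin n → ℤ)}
    {x₀ : EuclideanSpace ℝ (Fin n)} {r : ℝ} (hr : 0 < r)
    (hS : ∀ k ∈ S, (ball x₀ r ∩ unitCube k).Nonempty) :
    (S.card : ℝ) ≤ (1 + √n) ^ n * ((volume (ball (0 : EuclideanSpace ℝ (Fin n)) 1)).toReal +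
      (volume (ball x₀ r)).toReal) := by
  have h := (card_le_volume_of_unitCube_subset fun k hk => unitCube_subset_ball (hS k hk)).trans
    (addHaar_ball_add_le volume x₀ hr (Real.sqrt_nonneg n))
  rw [finrank_euclideanSpace_fin] at h
  have := ENNReal.toReal_mono (by finiteness) h
  rwa [ENNReal.toReal_natCast, ENNReal.toReal_mul, ENNReal.toReal_ofReal (by positivity),
    ENNReal.toReal_add measure_ball_lt_top.ne measure_ball_lt_top.ne] at this

lemma starNormE_indicator_eq (Φ : ℝ → ℝ) (B : Set (EuclideanSpace ℝ (Fin n))) :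
    starNormE Φ (B.indicator fun _ => (1 : ℝ)) =
      ∑' k, luxNormE Φ ((unitCube k ∩ B).indicator fun _ => (1 : ℝ)) := by
  simp_rw [starNormE, Set.indicator_indicator]

lemma starNormE_indicator_le {B : Set (EuclideanSpace ℝ (Fin n))} (hB : MeasurableSet B)
    (hfin : volume B ≠ ⊤) :
    starNormE logPhi (B.indicator fun _ => (1 : ℝ)) ≤
      ENNReal.ofReal ((volume B).toReal / Real.log (Real.exp 1 + 1 / (volume B).toReal)) := by
  set L := Real.log (Real.exp 1 + 1 / (volume B).toReal)
  have hL : 0 < L := log_exp_one_add_pos (one_div_nonneg.2 ENNReal.toReal_nonneg)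
  have hcube : ∀ k, luxNormE logPhi ((unitCube k ∩ B).indicator fun _ => (1 : ℝ)) ≤
      volume (unitCube k ∩ B) / ENNReal.ofReal L := fun k => by
    have hfin_k := (volume_unitCube_inter_le_one k B).trans_lt one_lt_top |>.ne
    refine (luxNormE_indicator_le ((measurableSet_unitCube k).inter hB) hfin_k).trans ?_
    rw [← ENNReal.ofReal_toReal hfin_k, ← ENNReal.ofReal_div_of_pos hL, ENNReal.toReal_ofReal
      ENNReal.toReal_nonneg]
    exact ENNReal.ofReal_le_ofReal (div_log_exp_one_add_inv_le ENNReal.toReal_nonneg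
      (ENNReal.toReal_mono hfin (measure_mono Set.inter_subset_right)))
  calc starNormE logPhi (B.indicator fun _ => (1 : ℝ))
      ≤ ∑' k, volume (unitCube k ∩ B) / ENNReal.ofReal L :=
        (starNormE_indicator_eq _ _).trans_le (ENNReal.tsum_le_tsum hcube)
  _ = ENNReal.ofReal ((volume B).toReal / L) := by
        simp_rw [div_eq_mul_inv (volume _)]
        rw [ENNReal.tsum_mul_right, ← div_eq_mul_inv, tsum_volume_unitCube_inter hB,
          ENNReal.ofReal_div_of_pos hL, ENNReal.ofReal_toReal hfin]

lemma le_starNormE_indicator {B : Set (EuclideanSpace ℝ (Fin n))} (hB : MeasurableSet B)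
    {S : Finset (Fin n → ℤ)} (hS : ∀ k ∉ S, volume (unitCube k ∩ B) = 0)
    {μ D : ℝ} (hμ : ∀ k, (volume (unitCube k ∩ B)).toReal ≤ μ)
    (hD : S.card * (μ * Real.log (Real.exp 1 + 1 / μ)) ≤ D) (hD0 : 0 ≤ D) :
    ENNReal.ofReal ((volume B).toReal ^ 2 / (2 * D)) ≤
      starNormE logPhi (B.indicator fun _ => (1 : ℝ)) := by
  set m : (Fin n → ℤ) → ℝ := fun k => (volume (unitCube k ∩ B)).toReal
  have hfin_k k : volume (unitCube k ∩ B) ≠ ⊤ :=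
    (volume_unitCube_inter_le_one k B).trans_lt one_lt_top |>.ne
  have hsum : ∑ k ∈ S, m k = (volume B).toReal := by
    rw [← ENNReal.toReal_sum fun k _ => hfin_k k,
      ← tsum_eq_sum (L := SummationFilter.unconditional _) hS, tsum_volume_unitCube_inter hB]
  have hL k : 0 < Real.log (Real.exp 1 + 1 / m k) :=
    log_exp_one_add_pos (one_div_nonneg.2 ENNReal.toReal_nonneg)
  have hX : 0 ≤ ∑ k ∈ S, m k / Real.log (Real.exp 1 + 1 / m k) :=
    Finset.sum_nonneg fun k _ => div_nonneg ENNReal.toReal_nonneg (hL k).le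
  have hCS := sq_sum_le_sum_div_log_mul_card S (fun k _ => ENNReal.toReal_nonneg) fun k _ => hμ k
  rw [hsum] at hCS
  have hreal : (volume B).toReal ^ 2 / (2 * D) ≤
      ∑ k ∈ S, m k / (2 * Real.log (Real.exp 1 + 1 / m k)) := by
    simp_rw [mul_comm (2 : ℝ), ← div_div, ← Finset.sum_div]
    gcongr
    exact div_le_of_le_mul₀ hD0 hX (hCS.trans (by gcongr))
  calc ENNReal.ofReal ((volume B).toReal ^ 2 / (2 * D))
      ≤ ∑ k ∈ S, ENNReal.ofReal (m k / (2 * Real.log (Real.exp 1 + 1 / m k))) := by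
        rw [← ENNReal.ofReal_sum_of_nonneg fun k _ =>
          div_nonneg ENNReal.toReal_nonneg (mul_pos two_pos (hL k)).le]
        exact ENNReal.ofReal_le_ofReal hreal
  _ ≤ ∑ k ∈ S, luxNormE logPhi ((unitCube k ∩ B).indicator fun _ => (1 : ℝ)) :=
        Finset.sum_le_sum fun k _ =>
          le_luxNormE_indicator ((measurableSet_unitCube k).inter hB) (hfin_k k)
  _ ≤ starNormE logPhi (B.indicator fun _ => (1 : ℝ)) :=
        (ENNReal.sum_le_tsum S).trans_eq (starNormE_indicator_eq _ _).symm

end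

lemma exists_le_starNormE_indicator_ball (n : ℕ) : ∃ c : ℝ, 0 < c ∧
    ∀ (x₀ : EuclideanSpace ℝ (Fin n)) (r : ℝ), 0 < r →
      ENNReal.ofReal (c * ((volume (ball x₀ r)).toReal /
          Real.log (Real.exp 1 + 1 / (volume (ball x₀ r)).toReal))) ≤
        starNormE logPhi ((ball x₀ r).indicator fun _ => (1 : ℝ)) := by
  set v := (volume (ball (0 : EuclideanSpace ℝ (Fin n)) 1)).toReal
  set K := (1 + √n) ^ n
  have hK : 0 < K := by positivity
  have hv : 0 ≤ v := ENNReal.toReal_nonneg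
  refine ⟨1 / (4 * K * (v + 1)), by positivity, fun x₀ r hr => ?_⟩
  set B := ball x₀ r
  set b := (volume B).toReal
  set L := Real.log (Real.exp 1 + 1 / b)
  have hb : 0 < b :=
    ENNReal.toReal_pos (measure_ball_pos _ _ hr).ne' measure_ball_lt_top.ne
  have hL : 0 < L := log_exp_one_add_pos (by positivity)
  set S := (finite_setOf_ball_inter_unitCube_nonempty x₀ r).toFinset
  have hmemS k : k ∈ S ↔ (B ∩ unitCube k).Nonempty := Set.Finite.mem_toFinset _
  have hS : ∀ k ∉ S, volume (unitCube k ∩ B) = 0 := fun k hk => by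
    rw [Set.inter_comm, Set.not_nonempty_iff_eq_empty.1 (mt (hmemS k).2 hk), measure_empty]
  have hμ k : (volume (unitCube k ∩ B)).toReal ≤ min 1 b :=
    le_min (ENNReal.toReal_le_of_le_ofReal zero_le_one
        (by simpa using volume_unitCube_inter_le_one k B))
      (ENNReal.toReal_mono measure_ball_lt_top.ne (measure_mono Set.inter_subset_right))
  have hcard := card_le_of_ball_inter_unitCube_nonempty hr fun k hk => (hmemS k).1 hk
  have hD : S.card * (min 1 b * Real.log (Real.exp 1 + 1 / min 1 b)) ≤
      2 * K * (v + 1) * (b * L) :=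
    calc _ ≤ K * (v + b) * (min 1 b * Real.log (Real.exp 1 + 1 / min 1 b)) := by
          gcongr
          exact mul_nonneg (le_min zero_le_one hb.le) (log_exp_one_add_pos (by positivity)).le
    _ ≤ K * (2 * (v + 1) * (b * L)) := by
          rw [mul_assoc]; exact mul_le_mul_of_nonneg_left (add_mul_min_one_mul_log_le hv hb) hK.le
    _ = _ := by ring
  refine le_of_eq_of_le ?_ (le_starNormE_indicator measurableSet_ball hS hμ hD (by positivity))
  congr 1
  field_simp
  ring

/-- For Φ(τ) = τ/log(e+τ) and any ball B ⊂ ℝⁿ,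
‖1_B‖_{L_*^Φ} ≍ |B|/log(e+1/|B|), with constants independent of B. -/
theorem starNorm_indicator_ball_equiv (n : ℕ) :
    ∃ c C : ℝ, 0 < c ∧ 0 < C ∧
      ∀ (x₀ : EuclideanSpace ℝ (Fin n)) (r : ℝ), 0 < r →
        ENNReal.ofReal (c * ((volume (Metric.ball x₀ r)).toReal /
            Real.log (Real.exp 1 + 1 / (volume (Metric.ball x₀ r)).toReal))) ≤
          starNormE (fun τ => τ / Real.log (Real.exp 1 + τ))
            (Set.indicator (Metric.ball x₀ r) (fun _ => (1:ℝ))) ∧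
        starNormE (fun τ => τ / Real.log (Real.exp 1 + τ))
            (Set.indicator (Metric.ball x₀ r) (fun _ => (1:ℝ))) ≤
          ENNReal.ofReal (C * ((volume (Metric.ball x₀ r)).toReal /
            Real.log (Real.exp 1 + 1 / (volume (Metric.ball x₀ r)).toReal))) := by
  obtain ⟨c, hc, hlower⟩ := exists_le_starNormE_indicator_ball n
  refine ⟨c, 1, hc, one_pos, fun x₀ r hr => ⟨hlower x₀ r hr, ?_⟩⟩
  rw [one_mul]
  exact starNormE_indicator_le measurableSet_ball measure_ball_lt_top.ne
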